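/- For every odd m ≥ 3 and every k ≥ 2, the composition identity φ_{2^k m}(x) = φ_m((φ_{2^k}(x))²) holds in ℝ[x]. -/

import Mathlib

open Polynomial
/-- `phiPoly n` : for `n ≥ 3`, the polynomial `∏_{0 < k < n/2, gcd(k,n)=1} (X - 4 sin²(kπ/n))` in `ℝ[X]`,
with `phiPoly 1 = X` and `phiPoly 2 = X - 4`. -/
noncomputable def phiPoly : ℕ → Polynomial ℝ
  | 1 => X
  | 2 => X - 4
  | n => ∏ k ∈ Finset.filter (fun k => 0 < k ∧ 2 * k < n ∧ Nat.gcd k n = 1) (Finset.range n),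
      (X - C (4 * (Real.sin ((k : ℝ) * Real.pi / (n : ℝ)))^2))

namespace PhiAux

noncomputable def Ffac (n k : ℕ) : Polynomial ℝ :=
  X - C (4 * (Real.sin ((k : ℝ) * Real.pi / (n : ℝ)))^2)

def Sset (n : ℕ) : Finset ℕ :=
  Finset.filter (fun k => 0 < k ∧ 2 * k < n ∧ Nat.gcd k n = 1) (Finset.range n)

lemma phi_eq {n : ℕ} (hn : 3 ≤ n) : phiPoly n = ∏ k ∈ Sset n, Ffac n k := by
  match n, hn with
  | (n+3), _ => rfl

lemma mem_Sset {n k : ℕ} :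
    k ∈ Sset n ↔ k < n ∧ 0 < k ∧ 2*k < n ∧ Nat.Coprime k n := by
  simp [Sset, Finset.mem_filter, Finset.mem_range, Nat.Coprime, and_assoc]

lemma factor (s : ℝ) :
    ((X - C 2)^2 : ℝ[X]) - C (4 * s^2) = (X - C (2 - 2*s)) * (X - C (2 + 2*s)) := by
  have h1 : (4 * s^2 : ℝ) = (2*s)^2 := by ring
  rw [h1, map_sub, map_add, map_pow]
  ring

lemma four_sin_sq (θ : ℝ) : 4 * Real.sin θ ^ 2 = 2 - 2 * Real.cos (2*θ) := by
  have h := Real.cos_sq θ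
  have h2 := Real.sin_sq θ
  linarith

lemma trig_sub (x : ℝ) : 4 * Real.sin (Real.pi/4 - x/2) ^ 2 = 2 - 2 * Real.sin x := by
  rw [four_sin_sq, show 2*(Real.pi/4 - x/2) = Real.pi/2 - x by ring,
    Real.cos_pi_div_two_sub]

lemma trig_add (x : ℝ) : 4 * Real.sin (Real.pi/4 + x/2) ^ 2 = 2 + 2 * Real.sin x := by
  rw [four_sin_sq, show 2*(Real.pi/4 + x/2) = Real.pi/2 - (-x) by ring,
    Real.cos_pi_div_two_sub, Real.sin_neg]
  ring

lemma cop_sub {a b t : ℕ} (h : a ≤ b) (hb : t ∣ b) (hc : Nat.Coprime a t) :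
    Nat.Coprime (b - a) t := by
  have d1 := Nat.gcd_dvd_left (b - a) t
  have d2 := (Nat.gcd_dvd_right (b - a) t).trans hb
  have d3 : Nat.gcd (b - a) t ∣ a := by
    have h5 := Nat.dvd_sub d2 d1
    rwa [Nat.sub_sub_self h] at h5
  exact Nat.dvd_one.mp (hc.gcd_eq_one ▸ Nat.dvd_gcd d3 (Nat.gcd_dvd_right _ _))

lemma cop_sub2 {a b t : ℕ} (h : b ≤ a) (hb : t ∣ b) (hc : Nat.Coprime a t) :
    Nat.Coprime (a - b) t := by
  have d1 := Nat.gcd_dvd_left (a - b) t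
  have d2 := (Nat.gcd_dvd_right (a - b) t).trans hb
  have d3 : Nat.gcd (a - b) t ∣ a := by
    have h5 := Nat.dvd_add d1 d2
    rwa [Nat.sub_add_cancel h] at h5
  exact Nat.dvd_one.mp (hc.gcd_eq_one ▸ Nat.dvd_gcd d3 (Nat.gcd_dvd_right _ _))

lemma cop_add {a b t : ℕ} (hb : t ∣ b) (hc : Nat.Coprime a t) :
    Nat.Coprime (b + a) t := by
  have d1 := Nat.gcd_dvd_left (b + a) t
  have d2 := (Nat.gcd_dvd_right (b + a) t).trans hb
  have d3 : Nat.gcd (b + a) t ∣ a := by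
    have h5 := Nat.dvd_sub d1 d2
    rwa [Nat.add_sub_cancel_left] at h5
  exact Nat.dvd_one.mp (hc.gcd_eq_one ▸ Nat.dvd_gcd d3 (Nat.gcd_dvd_right _ _))

lemma cop_mul2 {j s t : ℕ} (hs : s = 2^2 * t ∨ s = 2^3 * t) :
    Nat.Coprime j s ↔ Odd j ∧ Nat.Coprime j t := by
  rcases hs with h | h <;>
    rw [h, Nat.coprime_mul_iff_right, Nat.coprime_pow_right_iff (by norm_num),
      Nat.coprime_two_right]

lemma lemA (t : ℕ) (ht : 1 ≤ t) :
    phiPoly (8*t) = (phiPoly (4*t)).comp ((X - C 2)^2) := by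
  have htR : ((4*t : ℕ) : ℝ) ≠ 0 := Nat.cast_ne_zero.mpr (by omega)
  rw [phi_eq (by omega), phi_eq (by omega), Polynomial.prod_comp]
  have key : ∀ a ∈ Sset (4*t),
      (Ffac (4*t) a).comp ((X - C 2)^2) = Ffac (8*t) (2*t - a) * Ffac (8*t) (2*t + a) := by
    intro a ha
    rw [mem_Sset] at ha
    obtain ⟨h1, h2, h3, h4⟩ := ha
    have hle : a ≤ 2*t := by omega
    have hx1 : ((2*t - a : ℕ) : ℝ) * Real.pi / ((8*t : ℕ) : ℝ)
        = Real.pi/4 - ((a : ℝ) * Real.pi / ((4*t : ℕ) : ℝ))/2 := by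
      push_cast [Nat.cast_sub hle]
      have htR' : (t:ℝ) ≠ 0 := Nat.cast_ne_zero.mpr (by omega)
      field_simp
      ring
    have hx2 : ((2*t + a : ℕ) : ℝ) * Real.pi / ((8*t : ℕ) : ℝ)
        = Real.pi/4 + ((a : ℝ) * Real.pi / ((4*t : ℕ) : ℝ))/2 := by
      push_cast
      have htR' : (t:ℝ) ≠ 0 := Nat.cast_ne_zero.mpr (by omega)
      field_simp
      ring
    unfold Ffac
    rw [Polynomial.sub_comp, Polynomial.X_comp, Polynomial.C_comp, hx1, hx2,
      trig_sub, trig_add]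
    exact factor (Real.sin ((a : ℝ) * Real.pi / ((4*t : ℕ) : ℝ)))
  rw [Finset.prod_congr rfl key, Finset.prod_mul_distrib,
    ← Finset.prod_filter_mul_prod_filter_not (Sset (8*t)) (fun j => j < 2*t)]
  congr 1
  · refine (Finset.prod_nbij' (fun a => 2*t - a) (fun j => 2*t - j) ?_ ?_ ?_ ?_ ?_).symm
    · intro a ha
      rw [mem_Sset] at ha
      obtain ⟨h1, h2, h3, h4⟩ := ha
      obtain ⟨hodd, hcop⟩ := (cop_mul2 (Or.inl rfl)).mp h4
      have hodd' : a % 2 = 1 := Nat.odd_iff.mp hodd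
      rw [Finset.mem_filter, mem_Sset]
      refine ⟨⟨by omega, by omega, by omega, ?_⟩, by omega⟩
      refine (cop_mul2 (Or.inr rfl)).mpr ⟨Nat.odd_iff.mpr (by omega), ?_⟩
      exact cop_sub (by omega) ⟨2, by ring⟩ hcop
    · intro j hj
      rw [Finset.mem_filter, mem_Sset] at hj
      obtain ⟨⟨h1, h2, h3, h4⟩, h5⟩ := hj
      obtain ⟨hodd, hcop⟩ := (cop_mul2 (Or.inr rfl)).mp h4
      have hodd' : j % 2 = 1 := Nat.odd_iff.mp hodd
      rw [mem_Sset]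
      refine ⟨by omega, by omega, by omega, ?_⟩
      refine (cop_mul2 (Or.inl rfl)).mpr ⟨Nat.odd_iff.mpr (by omega), ?_⟩
      exact cop_sub (by omega) ⟨2, by ring⟩ hcop
    · intro a ha
      rw [mem_Sset] at ha
      omega
    · intro j hj
      rw [Finset.mem_filter, mem_Sset] at hj
      omega
    · intro a ha
      rfl
  · refine (Finset.prod_nbij' (fun a => 2*t + a) (fun j => j - 2*t) ?_ ?_ ?_ ?_ ?_).symm
    · intro a ha
      rw [mem_Sset] at ha
      obtain ⟨h1, h2, h3, h4⟩ := ha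
      obtain ⟨hodd, hcop⟩ := (cop_mul2 (Or.inl rfl)).mp h4
      have hodd' : a % 2 = 1 := Nat.odd_iff.mp hodd
      rw [Finset.mem_filter, mem_Sset]
      refine ⟨⟨by omega, by omega, by omega, ?_⟩, by omega⟩
      refine (cop_mul2 (Or.inr rfl)).mpr ⟨Nat.odd_iff.mpr (by omega), ?_⟩
      exact cop_add ⟨2, by ring⟩ hcop
    · intro j hj
      rw [Finset.mem_filter, mem_Sset] at hj
      obtain ⟨⟨h1, h2, h3, h4⟩, h5⟩ := hj
      obtain ⟨hodd, hcop⟩ := (cop_mul2 (Or.inr rfl)).mp h4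
      have hodd' : j % 2 = 1 := Nat.odd_iff.mp hodd
      rw [mem_Sset]
      refine ⟨by omega, by omega, by omega, ?_⟩
      refine (cop_mul2 (Or.inl rfl)).mpr ⟨Nat.odd_iff.mpr (by omega), ?_⟩
      exact cop_sub2 (by omega) ⟨2, by ring⟩ hcop
    · intro a ha
      rw [mem_Sset] at ha
      omega
    · intro j hj
      rw [Finset.mem_filter, mem_Sset] at hj
      obtain ⟨⟨h1, h2, h3, h4⟩, h5⟩ := hj
      obtain ⟨hodd, hcop⟩ := (cop_mul2 (Or.inr rfl)).mp h4
      have hodd' : j % 2 = 1 := Nat.odd_iff.mp hodd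
      omega
    · intro a ha
      rfl



lemma lemB (m : ℕ) (hm : 3 ≤ m) (hodd : Odd m) :
    phiPoly (4*m) = (phiPoly m).comp ((X - C 2)^2) := by
  have hm2 : m % 2 = 1 := Nat.odd_iff.mp hodd
  have hmR : ((m : ℕ) : ℝ) ≠ 0 := Nat.cast_ne_zero.mpr (by omega)
  rw [phi_eq (by omega), phi_eq (by omega), Polynomial.prod_comp]
  have key : ∀ a ∈ Sset m,
      (Ffac m a).comp ((X - C 2)^2) = Ffac (4*m) (m - 2*a) * Ffac (4*m) (m + 2*a) := by
    intro a ha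
    rw [mem_Sset] at ha
    obtain ⟨h1, h2, h3, h4⟩ := ha
    have hle : 2*a ≤ m := by omega
    have hx1 : ((m - 2*a : ℕ) : ℝ) * Real.pi / ((4*m : ℕ) : ℝ)
        = Real.pi/4 - ((a : ℝ) * Real.pi / ((m : ℕ) : ℝ))/2 := by
      push_cast [Nat.cast_sub hle]
      field_simp
      ring
    have hx2 : ((m + 2*a : ℕ) : ℝ) * Real.pi / ((4*m : ℕ) : ℝ)
        = Real.pi/4 + ((a : ℝ) * Real.pi / ((m : ℕ) : ℝ))/2 := by
      push_cast
      field_simp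
      ring
    unfold Ffac
    rw [Polynomial.sub_comp, Polynomial.X_comp, Polynomial.C_comp, hx1, hx2,
      trig_sub, trig_add]
    exact factor (Real.sin ((a : ℝ) * Real.pi / ((m : ℕ) : ℝ)))
  rw [Finset.prod_congr rfl key, Finset.prod_mul_distrib,
    ← Finset.prod_filter_mul_prod_filter_not (Sset (4*m)) (fun j => j < m)]
  have cop2m : Nat.Coprime 2 m := Nat.coprime_two_left.mpr hodd
  congr 1
  · refine (Finset.prod_nbij' (fun a => m - 2*a) (fun j => (m - j)/2) ?_ ?_ ?_ ?_ ?_).symm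
    · intro a ha
      rw [mem_Sset] at ha
      obtain ⟨h1, h2, h3, h4⟩ := ha
      rw [Finset.mem_filter, mem_Sset]
      refine ⟨⟨by omega, by omega, by omega, ?_⟩, by omega⟩
      refine (cop_mul2 (Or.inl rfl)).mpr ⟨Nat.odd_iff.mpr (by omega), ?_⟩
      exact cop_sub (by omega) dvd_rfl (cop2m.mul h4)
    · intro j hj
      rw [Finset.mem_filter, mem_Sset] at hj
      obtain ⟨⟨h1, h2, h3, h4⟩, h5⟩ := hj
      obtain ⟨hjodd, hcop⟩ := (cop_mul2 (Or.inl rfl)).mp h4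
      have hj2 : j % 2 = 1 := Nat.odd_iff.mp hjodd
      rw [mem_Sset]
      refine ⟨by omega, by omega, by omega, ?_⟩
      have hmj : Nat.Coprime (m - j) m := cop_sub (by omega) dvd_rfl hcop
      exact Nat.Coprime.coprime_dvd_left ⟨2, by omega⟩ hmj
    · intro a ha
      rw [mem_Sset] at ha
      omega
    · intro j hj
      rw [Finset.mem_filter, mem_Sset] at hj
      obtain ⟨⟨h1, h2, h3, h4⟩, h5⟩ := hj
      obtain ⟨hjodd, hcop⟩ := (cop_mul2 (Or.inl rfl)).mp h4
      have hj2 : j % 2 = 1 := Nat.odd_iff.mp hjodd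
      omega
    · intro a ha
      rfl
  · refine (Finset.prod_nbij' (fun a => m + 2*a) (fun j => (j - m)/2) ?_ ?_ ?_ ?_ ?_).symm
    · intro a ha
      rw [mem_Sset] at ha
      obtain ⟨h1, h2, h3, h4⟩ := ha
      rw [Finset.mem_filter, mem_Sset]
      refine ⟨⟨by omega, by omega, by omega, ?_⟩, by omega⟩
      refine (cop_mul2 (Or.inl rfl)).mpr ⟨Nat.odd_iff.mpr (by omega), ?_⟩
      exact cop_add dvd_rfl (cop2m.mul h4)
    · intro j hj
      rw [Finset.mem_filter, mem_Sset] at hj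
      obtain ⟨⟨h1, h2, h3, h4⟩, h5⟩ := hj
      obtain ⟨hjodd, hcop⟩ := (cop_mul2 (Or.inl rfl)).mp h4
      have hj2 : j % 2 = 1 := Nat.odd_iff.mp hjodd
      have hne : j ≠ m := by
        rintro rfl
        simp [Nat.Coprime] at hcop
        omega
      rw [mem_Sset]
      refine ⟨by omega, by omega, by omega, ?_⟩
      have hmj : Nat.Coprime (j - m) m := cop_sub2 (by omega) dvd_rfl hcop
      exact Nat.Coprime.coprime_dvd_left ⟨2, by omega⟩ hmj
    · intro a ha
      rw [mem_Sset] at ha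
      omega
    · intro j hj
      rw [Finset.mem_filter, mem_Sset] at hj
      obtain ⟨⟨h1, h2, h3, h4⟩, h5⟩ := hj
      obtain ⟨hjodd, hcop⟩ := (cop_mul2 (Or.inl rfl)).mp h4
      have hj2 : j % 2 = 1 := Nat.odd_iff.mp hjodd
      have hne : j ≠ m := by
        rintro rfl
        simp [Nat.Coprime] at hcop
        omega
      omega
    · intro a ha
      rfl

lemma phi4 : phiPoly 4 = X - C 2 := by
  rw [phi_eq (by norm_num)]
  have hs : Sset 4 = {1} := by decide
  rw [hs, Finset.prod_singleton]
  unfold Ffac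
  congr 1
  push_cast
  rw [one_mul, Real.sin_pi_div_four, div_pow, Real.sq_sqrt (by norm_num : (0:ℝ) ≤ 2)]
  norm_num

end PhiAux

/-- For odd `m ≥ 3` and `k ≥ 2`: `φ_{2^k m}(x) = φ_m((φ_{2^k}(x))²)` in `ℝ[X]`. -/
theorem phi_pow_two_mul_odd (m k : ℕ) (hm : 3 ≤ m) (hodd : Odd m) (hk : 2 ≤ k) :
    phiPoly (2 ^ k * m) = (phiPoly m).comp ((phiPoly (2 ^ k)) ^ 2) := by
  induction k, hk using Nat.le_induction with
  | base =>
      rw [show (2:ℕ)^2 * m = 4 * m by ring, PhiAux.lemB m hm hodd,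
        show (2:ℕ)^2 = 4 by norm_num, PhiAux.phi4]
  | succ k hk ih =>
      obtain ⟨j, rfl⟩ : ∃ j, k = j + 2 := ⟨k - 2, by omega⟩
      have hA2 : phiPoly (2^(j+3)) = (phiPoly (2^(j+2))).comp ((X - C 2)^2) := by
        have := PhiAux.lemA (2^j) (Nat.one_le_two_pow)
        rwa [show 8 * 2^j = 2^(j+3) by ring, show 4 * 2^j = 2^(j+2) by ring] at this
      rw [show 2^(j+2+1) * m = 8 * (2^j * m) by ring,
        PhiAux.lemA (2^j * m) (Nat.mul_pos (pow_pos (by norm_num) j) (by omega)),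
        show 4 * (2^j * m) = 2^(j+2) * m by ring, ih,
        Polynomial.comp_assoc, Polynomial.pow_comp, ← hA2]
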